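/- Define g : ℝ → ℂ by g(ω) = 1/(1+iω) + 1/(2−iω). There exists ε₀ > 0 such that for every ε with 0 < ε ≤ ε₀ and every ω ∈ ℝ the Hermitian 2×2 matrix M(ω) = [[2/(1+ω²), ε g(ω)], [ε conj(g(ω)), 4/(4+ω²)]] is positive semidefinite; in fact one has ε |g(ω)| ≤ min{ 2/(1+ω²), 4/(4+ω²) } for all ω ∈ ℝ, i.e., M(ω) is diagonally dominant. -/

import Mathlib

/-!
Since `g(ω) = 3 / ((1 + iω)(2 - iω))`, we have `|g(ω)|² = 9 / ((1 + ω²)(4 + ω²))`, which decays like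
the diagonal entries. Squaring shows `(2/3)|g(ω)|` is below both diagonal entries, because
`1 + ω² ≤ 4 + ω² ≤ 4(1 + ω²)`. A Hermitian matrix whose diagonal dominates the off-diagonal rows is
positive semidefinite, by Gershgorin's circle theorem applied to its real eigenvalues.
-/

open Matrix Complex
open scoped Real ComplexOrder

noncomputable section

/-- The off-diagonal symbol `g(ω) = 1/(1+iω) + 1/(2-iω)`. -/
def gEx (ω : ℝ) : ℂ := 1 / (1 + Complex.I * ω) + 1 / (2 - Complex.I * ω)

namespace Matrix.IsHermitian

variable {𝕜 n : Type*} [RCLike 𝕜] [Fintype n] [DecidableEq n] {A : Matrix n n 𝕜}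

theorem hasEigenvalue_eigenvalues (hA : A.IsHermitian) (i : n) :
    Module.End.HasEigenvalue (toLin' A) (hA.eigenvalues i : 𝕜) := by
  refine Module.End.hasEigenvalue_of_hasEigenvector (x := ⇑(hA.eigenvectorBasis i)) ⟨?_, ?_⟩
  · rw [Module.End.mem_eigenspace_iff, toLin'_apply, hA.mulVec_eigenvectorBasis,
      RCLike.real_smul_eq_coe_smul (K := 𝕜)]
  · simpa using hA.eigenvectorBasis.orthonormal.ne_zero i

theorem posSemidef_of_sum_norm_le_re_diag (hA : A.IsHermitian)
    (h : ∀ k, ∑ j ∈ Finset.univ.erase k, ‖A k j‖ ≤ RCLike.re (A k k)) : A.PosSemidef := by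
  refine hA.posSemidef_iff_eigenvalues_nonneg.mpr fun i => show 0 ≤ hA.eigenvalues i from ?_
  obtain ⟨k, hk⟩ := eigenvalue_mem_ball (hA.hasEigenvalue_eigenvalues i)
  rw [Metric.mem_closedBall, dist_eq_norm, ← hA.coe_re_apply_self k, ← RCLike.ofReal_sub,
    RCLike.norm_ofReal] at hk
  linarith [h k, neg_abs_le (hA.eigenvalues i - RCLike.re (A k k))]

end Matrix.IsHermitian

theorem gEx_eq_div (ω : ℝ) : gEx ω = 3 / ((1 + I * ω) * (2 - I * ω)) := by
  have h₁ : 1 + I * ω ≠ 0 := fun h => by simpa using congrArg re h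
  have h₂ : 2 - I * ω ≠ 0 := fun h => by simpa using congrArg re h
  rw [gEx]
  field_simp
  ring

theorem norm_gEx_sq (ω : ℝ) : ‖gEx ω‖ ^ 2 = 9 / ((1 + ω ^ 2) * (4 + ω ^ 2)) := by
  rw [gEx_eq_div, norm_div, norm_mul, div_pow, mul_pow]
  simp [Complex.sq_norm, normSq_apply]
  ring

theorem two_thirds_mul_norm_gEx_le (ω : ℝ) :
    2 / 3 * ‖gEx ω‖ ≤ min (2 / (1 + ω ^ 2)) (4 / (4 + ω ^ 2)) := by
  have hsq : (2 / 3 * ‖gEx ω‖) ^ 2 = 4 / ((1 + ω ^ 2) * (4 + ω ^ 2)) := by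
    rw [mul_pow, norm_gEx_sq]
    field_simp
    norm_num
  refine le_min ?_ ?_ <;> refine le_of_pow_le_pow_left₀ two_ne_zero (by positivity) ?_ <;>
    rw [hsq, div_pow, div_le_div_iff₀ (by positivity) (by positivity)] <;> nlinarith

/-- there is `ε₀ > 0` such that for all `0 < ε ≤ ε₀` and all `ω ∈ ℝ`,
`ε |g(ω)| ≤ min (2/(1+ω²)) (4/(4+ω²))` (diagonal dominance), and the Hermitian matrix
`M(ω) = [[2/(1+ω²), ε g(ω)], [ε conj(g(ω)), 4/(4+ω²)]]` is positive semidefinite. -/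
theorem diag_dominant_posSemidef :
    ∃ ε₀ : ℝ, 0 < ε₀ ∧ ∀ ε : ℝ, 0 < ε → ε ≤ ε₀ →
      (∀ ω : ℝ, ε * ‖gEx ω‖ ≤ min (2 / (1 + ω ^ 2)) (4 / (4 + ω ^ 2))) ∧
      (∀ ω : ℝ,
        (!![((2 / (1 + ω ^ 2) : ℝ) : ℂ), (ε : ℂ) * gEx ω;
            (ε : ℂ) * (starRingEnd ℂ) (gEx ω), ((4 / (4 + ω ^ 2) : ℝ) : ℂ)]).PosSemidef) := by
  refine ⟨2 / 3, by norm_num, fun ε hε hε₀ => ?_⟩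
  have hdom (ω : ℝ) : ε * ‖gEx ω‖ ≤ min (2 / (1 + ω ^ 2)) (4 / (4 + ω ^ 2)) :=
    (mul_le_mul_of_nonneg_right hε₀ (norm_nonneg _)).trans (two_thirds_mul_norm_gEx_le ω)
  refine ⟨hdom, fun ω => ?_⟩
  refine IsHermitian.posSemidef_of_sum_norm_le_re_diag ?_ fun k => ?_
  · ext i j
    fin_cases i <;> fin_cases j <;> simp [mul_comm]
  · fin_cases k
    · simpa [-ofReal_div, abs_of_pos hε] using (hdom ω).trans (min_le_left _ _)
    · simpa [-ofReal_div, abs_of_pos hε] using (hdom ω).trans (min_le_right _ _)
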